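/- If H is any graph of order t without isolated vertices and s ≥ 2, then the potential-Ramsey number satisfies r_pot(K_s, H) ≥ t + s - 2. In particular, the graphic sequence of G = K_{s-2} ∨ complement(K_{t-1}) (join of a clique on s-2 vertices with an independent set of size t-1), which has length t+s-3, is not potentially K_s-graphic and its complementary sequence is not potentially H-graphic. -/

import Mathlib

open SimpleGraph
open scoped Classical

/-- Degree of a vertex. -/
noncomputable def deg {V : Type} (G : SimpleGraph V) (v : V) : ℕ := Nat.card (G.neighborSet v)

/-- Number of vertices of degree exactly 1 (leaves for trees/forests). -/
noncomputable def numLeaves {V : Type} (G : SimpleGraph V) : ℕ := Nat.card {v : V // deg G v = 1}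

/-- Number of connected components containing at least one edge. -/
noncomputable def numEdgeComps {V : Type} (G : SimpleGraph V) : ℕ :=
  Nat.card {c : G.ConnectedComponent // ∃ v w : V, G.Adj v w ∧ G.connectedComponentMk v = c}

/-- Maximum degree. -/
noncomputable def maxDeg {V : Type} (G : SimpleGraph V) : ℕ := sSup (Set.range (deg G))

/-- `G` and `H` pack: a bijection sends edges of `H` to non-edges of `G`. -/
def Packs {V W : Type} (G : SimpleGraph V) (H : SimpleGraph W) : Prop :=
  ∃ f : W ≃ V, ∀ x y : W, H.Adj x y → ¬ G.Adj (f x) (f y)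

/-- `G` contains a copy of `H` as a subgraph. -/
def ContainsCopy {V W : Type} (G : SimpleGraph V) (H : SimpleGraph W) : Prop :=
  ∃ f : W ↪ V, ∀ x y : W, H.Adj x y → G.Adj (f x) (f y)

/-- `G` realizes the degree sequence `π`. -/
def IsRealization {n : ℕ} (G : SimpleGraph (Fin n)) (π : Fin n → ℕ) : Prop :=
  ∀ i, deg G i = π i

/-- `π` is a graphic sequence. -/
def Graphic {n : ℕ} (π : Fin n → ℕ) : Prop :=
  ∃ G : SimpleGraph (Fin n), IsRealization G π

/-- `π` is potentially `H`-graphic. -/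
def PotentiallyGraphic {n : ℕ} {W : Type} (π : Fin n → ℕ) (H : SimpleGraph W) : Prop :=
  ∃ G : SimpleGraph (Fin n), IsRealization G π ∧ ContainsCopy G H

/-- The complementary sequence `π̄ = (n-1-d_n, …, n-1-d_1)`. -/
def compSeq {n : ℕ} (π : Fin n → ℕ) : Fin n → ℕ := fun i => n - 1 - π i.rev

/-- The potential-Ramsey number. -/
noncomputable def rpot {W₁ W₂ : Type} (H₁ : SimpleGraph W₁) (H₂ : SimpleGraph W₂) : ℕ :=
  sInf {N : ℕ | ∀ π : Fin N → ℕ, Antitone π → Graphic π →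
    PotentiallyGraphic π H₁ ∨ PotentiallyGraphic (compSeq π) H₂}

/-- The star `K_{1,t-1}` on `t` vertices, centered at vertex `0`. -/
def starGraph (t : ℕ) : SimpleGraph (Fin t) := SimpleGraph.fromRel (fun i _ => (i : ℕ) = 0)

/-!
The witness for every `N ≤ t + s - 3` is the degree sequence of `K_a ∨ (N - a)·K_1` with
`a = min (s - 2) N`. Only its first `a ≤ s - 2` terms reach `s - 1 = deg_{K_s}`, so no realization
has room for `K_s`; only the last `N - a ≤ t - 1` terms of its complementary sequence are positive,
so no realization of the complement has room for `t` non-isolated vertices. The set defining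
`r_pot` is nonempty by the graph Ramsey bound `(s + t).choose s`, so its infimum is not the junk
value `0`.
-/

open Finset

namespace SimpleGraph

variable {V : Type*} (G : SimpleGraph V)

theorem exists_isNClique_or_isNClique_compl :
    ∀ (s t : ℕ) (A : Finset V), (s + t).choose s ≤ #A →
      (∃ B ⊆ A, G.IsNClique s B) ∨ ∃ B ⊆ A, Gᶜ.IsNClique t B
  | 0, _, _, _ => Or.inl ⟨∅, empty_subset _, isNClique_empty.mpr rfl⟩
  | _ + 1, 0, _, _ => Or.inr ⟨∅, empty_subset _, isNClique_empty.mpr rfl⟩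
  | s + 1, t + 1, A, hA => by
    obtain ⟨v, hv⟩ : A.Nonempty := card_pos.mp (lt_of_lt_of_le (Nat.choose_pos (by omega)) hA)
    set A₁ := (A.erase v).filter (G.Adj v)
    set A₂ := (A.erase v).filter (fun w => ¬ G.Adj v w)
    have hsplit : #A₁ + #A₂ = #A - 1 := by
      rw [card_filter_add_card_filter_not, card_erase_of_mem hv]
    have hpascal : (s + 1 + (t + 1)).choose (s + 1)
        = (s + (t + 1)).choose s + (s + 1 + t).choose (s + 1) := by
      rw [show s + 1 + (t + 1) = s + t + 1 + 1 by omega, Nat.choose_succ_succ,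
        show s + (t + 1) = s + t + 1 by omega, show s + 1 + t = s + t + 1 by omega]
    have hA₁A : A₁ ⊆ A := (filter_subset _ _).trans (erase_subset _ _)
    have hA₂A : A₂ ⊆ A := (filter_subset _ _).trans (erase_subset _ _)
    rcases (by omega : (s + (t + 1)).choose s ≤ #A₁ ∨ (s + 1 + t).choose (s + 1) ≤ #A₂)
      with h | h
    · rcases exists_isNClique_or_isNClique_compl s (t + 1) A₁ h with ⟨B, hB, hB'⟩ | ⟨B, hB, hB'⟩
      · exact Or.inl ⟨insert v B, insert_subset hv (hB.trans hA₁A),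
          hB'.insert fun w hw => (mem_filter.mp (hB hw)).2⟩
      · exact Or.inr ⟨B, hB.trans hA₁A, hB'⟩
    · rcases exists_isNClique_or_isNClique_compl (s + 1) t A₂ h with ⟨B, hB, hB'⟩ | ⟨B, hB, hB'⟩
      · exact Or.inl ⟨B, hB.trans hA₂A, hB'⟩
      · refine Or.inr ⟨insert v B, insert_subset hv (hB.trans hA₂A), hB'.insert fun w hw => ?_⟩
        obtain ⟨hw, hvw⟩ := mem_filter.mp (hB hw)
        exact (compl_adj G v w).mpr ⟨(ne_of_mem_erase hw).symm, hvw⟩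
termination_by s t => s + t

theorem top_isContained_or_top_isContained_compl [Fintype V] {s t : ℕ}
    (h : (s + t).choose s ≤ Fintype.card V) :
    (⊤ : SimpleGraph (Fin s)) ⊑ G ∨ (⊤ : SimpleGraph (Fin t)) ⊑ Gᶜ := by
  simp only [← not_cliqueFree_iff_top_isContained, CliqueFree, not_forall, not_not]
  rcases G.exists_isNClique_or_isNClique_compl s t univ h with ⟨B, -, hB⟩ | ⟨B, -, hB⟩
  exacts [Or.inl ⟨B, hB⟩, Or.inr ⟨B, hB⟩]

theorem isContained_top_fin_card [Fintype V] : G ⊑ (⊤ : SimpleGraph (Fin (Fintype.card V))) :=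
  (IsContained.of_le le_top).trans
    ⟨(Embedding.completeGraph (Fintype.equivFin V).toEmbedding).toCopy⟩

end SimpleGraph

open SimpleGraph

variable {V W W₁ W₂ : Type}

theorem deg_eq_degree [Fintype V] (G : SimpleGraph V) (v : V) : deg G v = G.degree v := by
  rw [deg, Nat.card_eq_fintype_card, card_neighborSet_eq_degree]

theorem deg_top {s : ℕ} (v : Fin s) : deg (⊤ : SimpleGraph (Fin s)) v = s - 1 := by
  rw [deg, neighborSet_top, Nat.card_coe_set_eq, Set.ncard_compl, Set.ncard_singleton, Nat.card_fin]

theorem containsCopy_iff_isContained {G : SimpleGraph V} {H : SimpleGraph W} :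
    ContainsCopy G H ↔ H ⊑ G :=
  ⟨fun ⟨f, hf⟩ => ⟨⟨⟨f, hf _ _⟩, f.injective⟩⟩,
    fun ⟨f⟩ => ⟨⟨f, f.injective⟩, fun _ _ => f.toHom.map_adj⟩⟩

theorem PotentiallyGraphic.card_le [Fintype W] {N m d : ℕ} {π : Fin N → ℕ} {H : SimpleGraph W}
    (hπH : PotentiallyGraphic π H) (hH : ∀ w, d ≤ deg H w)
    (hπ : ∀ i, d ≤ π i → (i : ℕ) < m) : Fintype.card W ≤ m := by
  obtain ⟨G, hG, hGH⟩ := hπH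
  obtain ⟨f⟩ := containsCopy_iff_isContained.mp hGH
  have hf : ∀ w, (f w : ℕ) < m := fun w => hπ _ <| by
    rw [← hG, deg_eq_degree]
    exact (hH w).trans_eq (deg_eq_degree H w) |>.trans (f.degree_le w)
  simpa using Fintype.card_le_of_injective (fun w => (⟨f w, hf w⟩ : Fin m))
    fun _ _ h => f.injective (Fin.val_injective (Fin.mk.inj h))

theorem IsRealization.compl_comap_rev {N : ℕ} {G : SimpleGraph (Fin N)} {π : Fin N → ℕ}
    (hG : IsRealization G π) : IsRealization (Gᶜ.comap Fin.revPerm) (compSeq π) := fun i => by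
  rw [deg_eq_degree, ← (Iso.comap Fin.revPerm Gᶜ).degree_eq, Iso.comap_apply, degree_compl,
    ← deg_eq_degree, Fintype.card_fin, hG]
  rfl

theorem IsRealization.potentiallyGraphic_compSeq {N : ℕ} {G : SimpleGraph (Fin N)}
    {π : Fin N → ℕ} {H : SimpleGraph W} (hG : IsRealization G π) (hH : H ⊑ Gᶜ) :
    PotentiallyGraphic (compSeq π) H :=
  ⟨_, hG.compl_comap_rev, containsCopy_iff_isContained.mpr <|
    hH.trans ⟨(Iso.comap Fin.revPerm Gᶜ).symm.toCopy⟩⟩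

theorem exists_forall_potentiallyGraphic_or_compSeq [Fintype W₁] [Fintype W₂]
    (H₁ : SimpleGraph W₁) (H₂ : SimpleGraph W₂) :
    ∃ N, ∀ π : Fin N → ℕ, Graphic π →
      PotentiallyGraphic π H₁ ∨ PotentiallyGraphic (compSeq π) H₂ := by
  refine ⟨(Fintype.card W₁ + Fintype.card W₂).choose (Fintype.card W₁), fun π ⟨G, hG⟩ => ?_⟩
  replace hG : IsRealization G π := hG
  rcases G.top_isContained_or_top_isContained_compl (Fintype.card_fin _).ge with h | h
  · exact Or.inl ⟨G, hG, containsCopy_iff_isContained.mpr (H₁.isContained_top_fin_card.trans h)⟩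
  · exact Or.inr (hG.potentiallyGraphic_compSeq (H₂.isContained_top_fin_card.trans h))

theorem le_rpot [Fintype W₁] [Fintype W₂] {H₁ : SimpleGraph W₁} {H₂ : SimpleGraph W₂} {M : ℕ}
    (h : ∀ N < M, ∃ π : Fin N → ℕ, Antitone π ∧ Graphic π ∧
      ¬ PotentiallyGraphic π H₁ ∧ ¬ PotentiallyGraphic (compSeq π) H₂) :
    M ≤ rpot H₁ H₂ := by
  obtain ⟨N₀, hN₀⟩ := exists_forall_potentiallyGraphic_or_compSeq H₁ H₂
  refine le_csInf ⟨N₀, fun π _ => hN₀ π⟩ fun N hN => not_lt.mp fun hNM => ?_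
  obtain ⟨π, hanti, hgr, h₁, h₂⟩ := h N hNM
  exact (hN π hanti hgr).elim h₁ h₂

/-- The degree sequence of the join of `K_a` with the empty graph on `N - a` vertices. -/
def splitSeq (N a : ℕ) : Fin N → ℕ := fun i => if (i : ℕ) < a then N - 1 else a

def splitGraph (N a : ℕ) : SimpleGraph (Fin N) := fromRel fun i _ => (i : ℕ) < a

theorem splitSeq_antitone (N a : ℕ) : Antitone (splitSeq N a) := fun i j (hij : i ≤ j) => by
  have := j.isLt
  unfold splitSeq
  split_ifs <;> omega

theorem isRealization_splitGraph {N a : ℕ} (ha : a ≤ N) :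
    IsRealization (splitGraph N a) (splitSeq N a) := fun i => by
  rw [deg_eq_degree, ← card_neighborFinset_eq_degree, splitSeq]
  split_ifs with hi
  · have : (splitGraph N a).neighborFinset i = univ.erase i := by
      ext j; rw [mem_neighborFinset]; simp [splitGraph, hi, eq_comm]
    rw [this, card_erase_of_mem (mem_univ i), card_univ, Fintype.card_fin]
  · have : (splitGraph N a).neighborFinset i = ({j | (j : ℕ) < a} : Finset (Fin N)) := by
      ext j; rw [mem_neighborFinset]; simp [splitGraph]
      grind
    rw [this, Fin.card_filter_val_lt, min_eq_right ha]

theorem splitSeq_graphic {N a : ℕ} (ha : a ≤ N) : Graphic (splitSeq N a) :=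
  ⟨_, isRealization_splitGraph ha⟩

theorem not_potentiallyGraphic_top_splitSeq {N a s : ℕ} (h : a + 2 ≤ s) :
    ¬ PotentiallyGraphic (splitSeq N a) (⊤ : SimpleGraph (Fin s)) := fun hπ => by
  have := hπ.card_le (m := a) (fun v => (deg_top v).ge) fun i hi => by
    unfold splitSeq at hi
    split_ifs at hi <;> omega
  rw [Fintype.card_fin] at this
  omega

theorem not_potentiallyGraphic_compSeq_splitSeq [Fintype W] {N a : ℕ} {H : SimpleGraph W}
    (hH : ∀ v, 0 < deg H v) (h : N - a < Fintype.card W) :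
    ¬ PotentiallyGraphic (compSeq (splitSeq N a)) H := fun hπ => by
  have := hπ.card_le (m := N - a) hH fun i hi => by
    simp only [compSeq, splitSeq, Fin.val_rev] at hi
    split_ifs at hi <;> omega
  omega

/-- Lower bound: for H of order t with no isolated vertices and s ≥ 2,
r_pot(K_s, H) ≥ t + s - 2; the degree sequence of K_{s-2} ∨ (t-1)·K_1 is the witness. -/
theorem rpot_lower_bound {t s : ℕ} {W : Type} [Fintype W] (H : SimpleGraph W)
    (hcard : Fintype.card W = t) (ht : 1 ≤ t) (hs : 2 ≤ s)
    (hiso : ∀ v : W, 0 < deg H v) :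
    t + s - 2 ≤ rpot (⊤ : SimpleGraph (Fin s)) H ∧
    ¬ PotentiallyGraphic
        (fun i : Fin (t + s - 3) => if (i : ℕ) < s - 2 then t + s - 4 else s - 2)
        (⊤ : SimpleGraph (Fin s)) ∧
    ¬ PotentiallyGraphic
        (compSeq (fun i : Fin (t + s - 3) => if (i : ℕ) < s - 2 then t + s - 4 else s - 2))
        H := by
  subst hcard
  rw [show Fintype.card W + s - 4 = Fintype.card W + s - 3 - 1 by omega]
  refine ⟨le_rpot fun N hN => ?_, not_potentiallyGraphic_top_splitSeq (by omega),
    not_potentiallyGraphic_compSeq_splitSeq hiso (by omega)⟩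
  exact ⟨splitSeq N (min (s - 2) N), splitSeq_antitone _ _, splitSeq_graphic (min_le_right _ _),
    not_potentiallyGraphic_top_splitSeq (by omega),
    not_potentiallyGraphic_compSeq_splitSeq hiso (by omega)⟩
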